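/- Fix Δ ≥ 0. Assume |p(t)| ≤ 1 for almost every t and τ_m ≤ Δ. Let x be a solution of x''(t) + p(t)·x(t − τ(t)) = 0 having a semicycle (a,b), i.e. x(a) = x(b) = 0 and x(t) ≠ 0 for all t ∈ (a,b), and fix any ρ ≥ max_{t∈[a−Δ−θ_Δ, a]} |x(t)| with ρ > 0. Then every point w ∈ (a,b) at which |x(w)| = max_{t∈[a,b]} |x(t)| satisfies w − a ≥ Ψ( ρ / max_{t∈[a,b]} |x(t)| , Δ ). -/

import Mathlib

open MeasureTheory Set Filter

/-- `x` solves the delay equation `x''(t) + p(t)·x(t − τ(t)) = 0` on `I` in the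
Carathéodory sense: `x` is differentiable on `I` and on `I` its derivative is an
indefinite integral of `-p(u)·x(u − τ(u))` (so `x` and its derivative are locally
absolutely continuous there, and the equation holds for a.e. `t ∈ I`). -/
def SolvesDDE (p τ x : ℝ → ℝ) (I : Set ℝ) : Prop :=
  (∀ t ∈ I, HasDerivAt x (deriv x t) t) ∧
  (∀ t₀ ∈ I, ∀ t ∈ I, deriv x t = deriv x t₀ - ∫ u in t₀..t, p u * x (u - τ u))

/-- `r` is the solution `r_Δ` of `r''(t) + r(t − Δ) = 0`, `t ≥ 0`, with `r ≡ 1` on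
`(-∞,0]` and `r'(0) = 0` (the derivative is an indefinite integral of `-r(· - Δ)`). -/
def IsDelayCosine (Δ : ℝ) (r : ℝ → ℝ) : Prop :=
  (∀ t ≤ (0:ℝ), r t = 1) ∧
  (∀ t, 0 ≤ t → HasDerivAt r (deriv r t) t) ∧
  (∀ t, 0 ≤ t → deriv r t = - ∫ u in (0:ℝ)..t, r (u - Δ))

/-- `θ` is the first zero of `r` on `[0,∞)`. -/
def IsFirstZero (r : ℝ → ℝ) (θ : ℝ) : Prop :=
  0 < θ ∧ r θ = 0 ∧ ∀ t, 0 ≤ t → t < θ → 0 < r t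

/-- `g(w) = ρ·r(θ − w − Δ)·χ_{[−Δ,0]}(w)`. -/
noncomputable def gAux (ρ Δ θ : ℝ) (r : ℝ → ℝ) : ℝ → ℝ :=
  (Set.Icc (-Δ) (0:ℝ)).indicator fun w => ρ * r (θ - w - Δ)

/-- The double integral `∫_{-c}^0 (∫_{-c}^s max (β w) (g w) dw) ds`. -/
noncomputable def doubleInt (g β : ℝ → ℝ) (c : ℝ) : ℝ :=
  ∫ s in (-c)..(0:ℝ), ∫ w in (-c)..s, max (β w) (g w)

/-- The recursively defined sequences `β_n`, `ϖ_n` associated with `g`. -/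
def IsBetaSeq (g : ℝ → ℝ) (β : ℕ → ℝ → ℝ) (ϖ : ℕ → ℝ) : Prop :=
  (∀ t ≤ (0:ℝ), β 0 t = 1) ∧
  ∀ n : ℕ,
    (0 < ϖ n ∧ doubleInt g (β n) (ϖ n) = 1) ∧
    (∀ t, t ≤ -ϖ n → β (n+1) t = 1) ∧
    (∀ t, -ϖ n ≤ t → t ≤ 0 →
      β (n+1) t = 1 - ∫ s in (-ϖ n)..t, ∫ w in (-ϖ n)..s, max (β n w) (g w))

/-- `x` has a locally absolutely continuous derivative on `[a,b]`, with a.e. second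
derivative `w`. -/
def HasSecondDerivAEOn (x w : ℝ → ℝ) (a b : ℝ) : Prop :=
  (∀ t ∈ Set.Icc a b, HasDerivAt x (deriv x t) t) ∧
  (∀ t ∈ Set.Icc a b, deriv x t = deriv x a + ∫ u in a..t, w u)

/-!
The delay cosine is the extremal solution.

Behind `a`: if `|x(a - s)|` exceeded `ρ r(θ - s)` on `[0, θ]`, its maximal excess `μ > 0` would
be a bump of `± x - ρ r(θ - (a - ·))` on `[a - θ, a]`, nonpositive at both ends. Since `|p| ≤ 1`
and the delayed values stay within `μ` of the delay cosine, the bump has second derivative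
`≥ -μ`, so each of its flanks is at least `√2` long; but `θ < 2`.

Ahead of `a`, by induction on `n`: if `x ≤ M β_n(a - ·)` on `[a, w]`, the delayed term is bounded
by `M max(β_n, g)(a - ·)` (the `g`-part from the estimate behind `a`), so `x - M β_{n+1}(a - ·)`
is convex and vanishes at `a`. If `ϖ_n > w - a`, it would be positive with negative slope at the
maximum point `w`, which convexity forbids; so `ϖ_n ≤ w - a`, and its value `≤ 0` at `a + ϖ_n`
gives `x ≤ M β_{n+1}(a - ·)`.
-/

open intervalIntegral

theorem MeasureTheory.ae_le_of_essSup_le {X : Type*} [MeasurableSpace X] {μ : Measure X}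
    {f : X → ℝ} {c : ℝ} (hb : ∃ C, ∀ᵐ t ∂μ, |f t| ≤ C) (h : essSup f μ ≤ c) :
    ∀ᵐ t ∂μ, f t ≤ c := by
  obtain ⟨C, hC⟩ := hb
  have hbdd : IsBoundedUnder (· ≤ ·) (ae μ) f :=
    ⟨C, eventually_map.2 (hC.mono fun t ht => (le_abs_self _).trans ht)⟩
  filter_upwards [ae_le_essSup hbdd] with t ht using ht.trans h

theorem abs_le_sSup_image {x : ℝ → ℝ} (hx : Continuous x) {α β t : ℝ} (ht : t ∈ Icc α β) :
    |x t| ≤ sSup ((fun t => |x t|) '' Icc α β) :=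
  le_csSup (isCompact_Icc.image hx.abs).bddAbove (mem_image_of_mem _ ht)

theorem nonneg_of_pos_of_ne_zero {y : ℝ → ℝ} {a w : ℝ} (hy : ContinuousOn y (Icc a w))
    (hne : ∀ t ∈ Ioo a w, y t ≠ 0) (hw : 0 < y w) : ∀ t ∈ Icc a w, 0 ≤ y t := by
  intro t ht
  by_contra! hneg
  have htw : t < w := ht.2.lt_of_ne fun h => by rw [h] at hneg; linarith
  obtain ⟨z, hz, hz0⟩ := intermediate_value_Ioo htw.le (hy.mono (Icc_subset_Icc ht.1 le_rfl))
    ⟨hneg, hw⟩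
  exact hne z ⟨ht.1.trans_lt hz.1, hz.2⟩ hz0

section RealAnalysis

variable {h h' : ℝ → ℝ} {α β μ : ℝ}

/-- Throughout, `h'' ≥ -μ` is expressed as `MonotoneOn (fun s => h' s + μ * s)`. -/
theorem tangent_sub_sq_le (hcont : ContinuousOn h (Icc α β))
    (hderiv : ∀ s ∈ Ioo α β, HasDerivAt h (h' s) s)
    (hmono : MonotoneOn (fun s => h' s + μ * s) (Icc α β)) {t₀ t : ℝ}
    (ht₀ : t₀ ∈ Icc α β) (ht : t ∈ Icc α β) :
    h t₀ + h' t₀ * (t - t₀) - μ / 2 * (t - t₀) ^ 2 ≤ h t := by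
  set k : ℝ → ℝ := fun s => h s - h' t₀ * (s - t₀) + μ / 2 * (s - t₀) ^ 2
  have hk : ∀ s ∈ Ioo α β, HasDerivAt k (h' s + μ * s - (h' t₀ + μ * t₀)) s := by
    intro s hs
    have hlin := (hasDerivAt_id' s).sub_const t₀
    exact (((hderiv s hs).sub (hlin.const_mul (h' t₀))).add
      ((hlin.pow 2).const_mul (μ / 2))).congr_deriv (by ring)
  have hkc : ContinuousOn k (Icc α β) := by
    simp only [k]
    exact (hcont.sub (by fun_prop)).add (by fun_prop)
  suffices k t₀ ≤ k t by simp only [k, sub_self] at this; linarith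
  rcases le_total t₀ t with hle | hle
  · have hsub : Icc t₀ t ⊆ Icc α β := Icc_subset_Icc ht₀.1 ht.2
    refine monotoneOn_of_hasDerivWithinAt_nonneg (f' := fun s => h' s + μ * s - (h' t₀ + μ * t₀))
      (convex_Icc t₀ t) (hkc.mono hsub)
      (fun s hs => ?_) (fun s hs => ?_) ⟨le_rfl, hle⟩ ⟨hle, le_rfl⟩ hle
    · rw [interior_Icc] at hs ⊢
      exact (hk s (Ioo_subset_Ioo ht₀.1 ht.2 hs)).hasDerivWithinAt
    · rw [interior_Icc] at hs
      exact sub_nonneg.2 (hmono ht₀ (hsub (Ioo_subset_Icc_self hs)) hs.1.le)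
  · have hsub : Icc t t₀ ⊆ Icc α β := Icc_subset_Icc ht.1 ht₀.2
    refine antitoneOn_of_hasDerivWithinAt_nonpos (f' := fun s => h' s + μ * s - (h' t₀ + μ * t₀))
      (convex_Icc t t₀) (hkc.mono hsub)
      (fun s hs => ?_) (fun s hs => ?_) ⟨le_rfl, hle⟩ ⟨hle, le_rfl⟩ hle
    · rw [interior_Icc] at hs ⊢
      exact (hk s (Ioo_subset_Ioo ht.1 ht₀.2 hs)).hasDerivWithinAt
    · rw [interior_Icc] at hs
      exact sub_nonpos.2 (hmono (hsub (Ioo_subset_Icc_self hs)) ht₀ hs.2.le)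

/-- By the tangent bound `h ≥ μ - μ (t - t₀)² / 2`, each side of the maximum has length `≥ √2`. -/
theorem eight_le_sq_of_isMaxOn (hcont : ContinuousOn h (Icc α β))
    (hderiv : ∀ s ∈ Ioo α β, HasDerivAt h (h' s) s)
    (hmono : MonotoneOn (fun s => h' s + μ * s) (Icc α β)) {t₀ : ℝ} (ht₀ : t₀ ∈ Ioo α β)
    (hmax : IsMaxOn h (Icc α β) t₀) (hμ : 0 < μ) (ht₀μ : h t₀ = μ)
    (hα : h α ≤ 0) (hβ : h β ≤ 0) : 8 ≤ (β - α) ^ 2 := by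
  have hcrit : h' t₀ = 0 :=
    (hmax.isLocalMax (Icc_mem_nhds ht₀.1 ht₀.2)).hasDerivAt_eq_zero (hderiv t₀ ht₀)
  have hαβ : α ≤ β := (ht₀.1.trans ht₀.2).le
  have hl := tangent_sub_sq_le hcont hderiv hmono (Ioo_subset_Icc_self ht₀) (left_mem_Icc.2 hαβ)
  have hr := tangent_sub_sq_le hcont hderiv hmono (Ioo_subset_Icc_self ht₀) (right_mem_Icc.2 hαβ)
  rw [hcrit, ht₀μ] at hl hr
  have h2l : 2 ≤ (t₀ - α) ^ 2 := by nlinarith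
  have h2r : 2 ≤ (β - t₀) ^ 2 := by nlinarith
  have hprod : 2 ≤ (t₀ - α) * (β - t₀) := by
    nlinarith [mul_pos (sub_pos.2 ht₀.1) (sub_pos.2 ht₀.2),
      mul_le_mul h2l h2r zero_le_two (sq_nonneg _)]
  nlinarith

theorem monotoneOn_sub_add_of_integral_le {y' z' F K : ℝ → ℝ}
    (hy : ∀ t₁ ∈ Icc α β, ∀ t₂ ∈ Icc α β, y' t₂ - y' t₁ = -∫ u in t₁..t₂, F u)
    (hz : ∀ t₁ ∈ Icc α β, ∀ t₂ ∈ Icc α β, z' t₂ - z' t₁ = -∫ u in t₁..t₂, K u)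
    (hF : IntervalIntegrable F volume α β) (hK : IntervalIntegrable K volume α β)
    (hFK : ∀ᵐ u, u ∈ Icc α β → F u ≤ K u + μ) :
    MonotoneOn (fun t => y' t - z' t + μ * t) (Icc α β) := by
  intro t₁ ht₁ t₂ ht₂ hle
  have hsub : uIcc t₁ t₂ ⊆ uIcc α β :=
    uIcc_subset_uIcc (Icc_subset_uIcc ht₁) (Icc_subset_uIcc ht₂)
  have hint : 0 ≤ ∫ u in t₁..t₂, (K u - F u + μ) := by
    refine integral_nonneg_of_ae_restrict hle ?_
    filter_upwards [ae_restrict_mem measurableSet_Icc, ae_restrict_of_ae hFK] with u hu hFKu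
    show 0 ≤ K u - F u + μ
    linarith [hFKu ⟨ht₁.1.trans hu.1, hu.2.trans ht₂.2⟩]
  rw [integral_add ((hK.mono_set hsub).sub (hF.mono_set hsub)) intervalIntegrable_const,
    integral_sub (hK.mono_set hsub) (hF.mono_set hsub), intervalIntegral.integral_const,
    smul_eq_mul] at hint
  have hy₁₂ := hy t₁ ht₁ t₂ ht₂
  have hz₁₂ := hz t₁ ht₁ t₂ ht₂
  simp only
  linarith

end RealAnalysis

namespace IsDelayCosine

variable {Δ θ : ℝ} {r : ℝ → ℝ}

theorem hasDerivAt_zero_of_neg (hr : IsDelayCosine Δ r) {t : ℝ} (ht : t < 0) :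
    HasDerivAt r 0 t :=
  (hasDerivAt_const t 1).congr_of_eventuallyEq
    (eventually_of_mem (Iio_mem_nhds ht) fun s hs => hr.1 s (le_of_lt hs))

theorem hasDerivAt (hr : IsDelayCosine Δ r) (t : ℝ) : HasDerivAt r (deriv r t) t := by
  rcases lt_or_ge t 0 with ht | ht
  · rw [(hr.hasDerivAt_zero_of_neg ht).deriv]
    exact hr.hasDerivAt_zero_of_neg ht
  · exact hr.2.1 t ht

theorem differentiable (hr : IsDelayCosine Δ r) : Differentiable ℝ r :=
  fun t => (hr.hasDerivAt t).differentiableAt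

theorem continuous (hr : IsDelayCosine Δ r) : Continuous r := hr.differentiable.continuous

theorem deriv_sub_deriv (hr : IsDelayCosine Δ r) {s₁ s₂ : ℝ} (h₁ : 0 ≤ s₁) (h₂ : 0 ≤ s₂) :
    deriv r s₂ - deriv r s₁ = -∫ u in s₁..s₂, r (u - Δ) := by
  have hint : ∀ a b : ℝ, IntervalIntegrable (fun u => r (u - Δ)) volume a b := fun a b =>
    (hr.continuous.comp (continuous_sub_right Δ)).intervalIntegrable a b
  rw [hr.2.2 s₂ h₂, hr.2.2 s₁ h₁, ← integral_interval_sub_left (hint 0 s₂) (hint 0 s₁)]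
  ring

theorem hasDerivWithinAt_deriv (hr : IsDelayCosine Δ r) {t : ℝ} (ht : 0 ≤ t) :
    HasDerivWithinAt (deriv r) (-r (t - Δ)) (Ici t) t := by
  have hc : Continuous fun u => r (u - Δ) := hr.continuous.comp (continuous_sub_right Δ)
  exact (hc.integral_hasStrictDerivAt 0 t).hasDerivAt.neg.hasDerivWithinAt.congr
    (fun s hs => hr.2.2 s (ht.trans hs)) (hr.2.2 t ht)

theorem continuousOn_deriv (hr : IsDelayCosine Δ r) : ContinuousOn (deriv r) (Ici 0) := by
  have hc : Continuous fun u => r (u - Δ) := hr.continuous.comp (continuous_sub_right Δ)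
  exact (continuous_primitive (fun a b => hc.intervalIntegrable a b) 0).neg.continuousOn.congr
    fun s hs => hr.2.2 s hs

theorem nonneg (hr : IsDelayCosine Δ r) (hθ : IsFirstZero r θ) {t : ℝ} (ht : t ≤ θ) :
    0 ≤ r t := by
  rcases le_or_gt t 0 with h0 | h0
  · rw [hr.1 t h0]; exact zero_le_one
  · rcases ht.lt_or_eq with hlt | rfl
    · exact (hθ.2.2 t h0.le hlt).le
    · exact hθ.2.1.ge

theorem antitoneOn (hΔ : 0 ≤ Δ) (hr : IsDelayCosine Δ r) (hθ : IsFirstZero r θ) :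
    AntitoneOn r (Iic θ) := by
  refine antitoneOn_of_hasDerivWithinAt_nonpos (convex_Iic θ) hr.continuous.continuousOn
    (fun t _ => (hr.hasDerivAt t).hasDerivWithinAt) fun t ht => ?_
  rw [interior_Iic] at ht
  rcases lt_or_ge t 0 with h0 | h0
  · rw [(hr.hasDerivAt_zero_of_neg h0).deriv]
  · rw [hr.2.2 t h0, neg_nonpos]
    exact integral_nonneg h0 fun u hu => hr.nonneg hθ (by linarith [hu.2, mem_Iio.1 ht])

theorem le_one (hΔ : 0 ≤ Δ) (hr : IsDelayCosine Δ r) (hθ : IsFirstZero r θ) {t : ℝ}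
    (ht : t ≤ θ) : r t ≤ 1 := by
  rcases le_or_gt t 0 with h0 | h0
  · exact (hr.1 t h0).le
  · exact (hr.antitoneOn hΔ hθ (show (0:ℝ) ∈ Iic θ from hθ.1.le) ht h0.le).trans_eq
      (hr.1 0 le_rfl)

theorem one_sub_sq_div_two_le (hΔ : 0 ≤ Δ) (hr : IsDelayCosine Δ r) (hθ : IsFirstZero r θ) :
    ∀ t ∈ Icc 0 θ, 1 - t ^ 2 / 2 ≤ r t := by
  have hd_lower : ∀ t ∈ Icc 0 θ, -t ≤ deriv r t :=
    image_le_of_deriv_right_le_deriv_boundary (f' := fun _ => -1) (by fun_prop)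
      (fun t _ => (hasDerivAt_neg t).hasDerivWithinAt)
      (by simp [hr.2.2 0 le_rfl]) (hr.continuousOn_deriv.mono Icc_subset_Ici_self)
      (fun t ht => hr.hasDerivWithinAt_deriv ht.1)
      fun t ht => neg_le_neg (hr.le_one hΔ hθ (by linarith [ht.2]))
  exact image_le_of_deriv_right_le_deriv_boundary (f' := fun t => -t) (by fun_prop)
    (fun t _ => (((hasDerivAt_pow 2 t).div_const 2).const_sub 1).hasDerivWithinAt.congr_deriv
      (by ring)) (by simp [hr.1 0 le_rfl]) hr.continuous.continuousOn
    (fun t _ => (hr.hasDerivAt t).hasDerivWithinAt)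
    fun t ht => hd_lower t (Ico_subset_Icc_self ht)

theorem le_one_sub_sq_div_two_add (hΔ : 0 ≤ Δ) (hr : IsDelayCosine Δ r)
    (hθ : IsFirstZero r θ) : ∀ t ∈ Icc 0 θ, r t ≤ 1 - t ^ 2 / 2 + t ^ 4 / 24 := by
  have hd_upper : ∀ t ∈ Icc 0 θ, deriv r t ≤ -t + t ^ 3 / 6 :=
    image_le_of_deriv_right_le_deriv_boundary
      (hr.continuousOn_deriv.mono Icc_subset_Ici_self)
      (fun t ht => hr.hasDerivWithinAt_deriv ht.1) (by simp [hr.2.2 0 le_rfl]) (by fun_prop)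
      (fun t _ => ((hasDerivAt_neg t).add ((hasDerivAt_pow 3 t).div_const 6)).hasDerivWithinAt)
      fun t ht => by
        have hshift := hr.antitoneOn hΔ hθ (show t - Δ ∈ Iic θ from mem_Iic.2
          (by linarith [ht.2])) (show t ∈ Iic θ from ht.2.le) (by linarith)
        have := one_sub_sq_div_two_le hΔ hr hθ t (Ico_subset_Icc_self ht)
        push_cast
        linarith
  exact image_le_of_deriv_right_le_deriv_boundary hr.continuous.continuousOn
    (fun t _ => (hr.hasDerivAt t).hasDerivWithinAt) (by simp [hr.1 0 le_rfl]) (by fun_prop)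
    (fun t _ => ((((hasDerivAt_pow 2 t).div_const 2).const_sub 1).add
      ((hasDerivAt_pow 4 t).div_const 24)).hasDerivWithinAt)
    fun t ht => by
      have := hd_upper t (Ico_subset_Icc_self ht)
      push_cast
      linarith

theorem firstZero_lt_two (hΔ : 0 ≤ Δ) (hr : IsDelayCosine Δ r) (hθ : IsFirstZero r θ) :
    θ < 2 := by
  by_contra! h2
  have hr2 := le_one_sub_sq_div_two_add hΔ hr hθ 2 ⟨zero_le_two, h2⟩
  norm_num at hr2
  linarith [hr.nonneg hθ h2]

end IsDelayCosine

structure AdmissibleDelay (p τ : ℝ → ℝ) (Δ : ℝ) : Prop where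
  measurable_coeff : Measurable p
  measurable_delay : Measurable τ
  delay_nonneg : ∀ t, 0 ≤ τ t
  ae_delay_le : ∀ᵐ t, τ t ≤ Δ
  ae_abs_coeff_le : ∀ᵐ t, |p t| ≤ 1

namespace AdmissibleDelay

variable {p τ x B : ℝ → ℝ} {Δ : ℝ}

theorem ae_abs_mul_le (h : AdmissibleDelay p τ Δ) {s : Set ℝ}
    (hB : ∀ u ∈ s, ∀ v ∈ Icc (u - Δ) u, |x v| ≤ B u) :
    ∀ᵐ u, u ∈ s → |p u * x (u - τ u)| ≤ B u := by
  filter_upwards [h.ae_abs_coeff_le, h.ae_delay_le] with u hp hτ hu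
  have hx := hB u hu (u - τ u) ⟨by linarith, by linarith [h.delay_nonneg u]⟩
  rw [abs_mul]
  nlinarith [abs_nonneg (x (u - τ u))]

theorem intervalIntegrable (h : AdmissibleDelay p τ Δ) (hx : Continuous x) (α γ : ℝ) :
    IntervalIntegrable (fun u => p u * x (u - τ u)) volume α γ := by
  obtain ⟨C, hC⟩ := isCompact_Icc.exists_bound_of_continuousOn
    (hx.continuousOn (s := Icc (min α γ - Δ) (max α γ)))
  have hmeas : Measurable fun u => p u * x (u - τ u) :=
    h.measurable_coeff.mul (hx.measurable.comp (measurable_id.sub h.measurable_delay))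
  have hb := h.ae_abs_mul_le (s := uIcc α γ) (B := fun _ => C) fun u hu v hv => by
    simpa only [Real.norm_eq_abs] using hC v ⟨by linarith [hu.1, hv.1], hv.2.trans hu.2⟩
  refine (intervalIntegrable_const (c := C)).mono_fun' hmeas.aestronglyMeasurable ?_
  filter_upwards [ae_restrict_mem measurableSet_uIoc, ae_restrict_of_ae hb] with u hu hbu
  exact hbu (uIoc_subset_uIcc hu)

end AdmissibleDelay

namespace SolvesDDE

variable {p τ x : ℝ → ℝ} {Δ θ : ℝ} {r : ℝ → ℝ}

theorem neg {I : Set ℝ} (hx : SolvesDDE p τ x I) : SolvesDDE p τ (-x) I := by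
  refine ⟨fun t ht => by simpa only [deriv.neg] using (hx.1 t ht).neg, fun t₀ ht₀ t ht => ?_⟩
  simp only [deriv.neg, Pi.neg_apply, mul_neg, intervalIntegral.integral_neg, hx.2 t₀ ht₀ t ht]
  ring

theorem exists_pos_abs_eq {I : Set ℝ} (hx : SolvesDDE p τ x I) {w : ℝ} (hw : x w ≠ 0) :
    ∃ y, SolvesDDE p τ y I ∧ (∀ t, |y t| = |x t|) ∧ 0 < y w := by
  rcases hw.lt_or_gt with hneg | hpos
  · exact ⟨-x, hx.neg, fun t => abs_neg (x t), neg_pos.2 hneg⟩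
  · exact ⟨x, hx, fun _ => rfl, hpos⟩

theorem hasDerivAt (hx : SolvesDDE p τ x univ) (t : ℝ) : HasDerivAt x (deriv x t) t :=
  hx.1 t (mem_univ t)

theorem continuous (hx : SolvesDDE p τ x univ) : Continuous x :=
  continuous_iff_continuousAt.2 fun t => (hx.hasDerivAt t).continuousAt

theorem deriv_sub_deriv (hx : SolvesDDE p τ x univ) (t₁ t₂ : ℝ) :
    deriv x t₂ - deriv x t₁ = -∫ u in t₁..t₂, p u * x (u - τ u) := by
  rw [hx.2 t₁ (mem_univ _) t₂ (mem_univ _)]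
  ring

theorem monotoneOn_deriv_sub_delayCosine (hr : IsDelayCosine Δ r)
    (hpτ : AdmissibleDelay p τ Δ) (hx : SolvesDDE p τ x univ) {α β ρ μ : ℝ}
    (hbound : ∀ᵐ u, u ∈ Icc α β → |p u * x (u - τ u)| ≤ ρ * r (u - α - Δ) + μ) :
    MonotoneOn (fun t => deriv x t - ρ * deriv r (t - α) + μ * t) (Icc α β) := by
  have hK : Continuous fun u => ρ * r (u - α - Δ) := by
    have := hr.continuous; fun_prop
  refine monotoneOn_sub_add_of_integral_le (fun t₁ _ t₂ _ => hx.deriv_sub_deriv t₁ t₂)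
    (fun t₁ ht₁ t₂ ht₂ => ?_) (hpτ.intervalIntegrable hx.continuous α β)
    (hK.intervalIntegrable α β) (hbound.mono fun u hu hmem => (le_abs_self _).trans (hu hmem))
  rw [← mul_sub, hr.deriv_sub_deriv (sub_nonneg.2 ht₁.1) (sub_nonneg.2 ht₂.1),
    intervalIntegral.integral_const_mul, ← integral_comp_sub_right (fun v => r (v - Δ)) α]
  ring

theorem eight_le_sq_of_sub_delayCosine_le (hΔ : 0 ≤ Δ) (hr : IsDelayCosine Δ r)
    (hθ : IsFirstZero r θ) (hpτ : AdmissibleDelay p τ Δ) (hx : SolvesDDE p τ x univ)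
    {a ρ μ t₀ : ℝ} (hρ : 0 ≤ ρ) (hμ : 0 < μ)
    (hwin : ∀ v ∈ Icc (a - θ - Δ) a, |x v| ≤ ρ * r (θ - (a - v)) + μ)
    (hle : ∀ t ∈ Icc (a - θ) a, x t - ρ * r (θ - (a - t)) ≤ μ) (ht₀ : t₀ ∈ Ioo (a - θ) a)
    (ht₀μ : x t₀ - ρ * r (θ - (a - t₀)) = μ) (hxθ : x (a - θ) ≤ ρ) (hxa : x a = 0) :
    8 ≤ θ ^ 2 := by
  simp only [show ∀ t, θ - (a - t) = t - (a - θ) from fun t => by ring] at hwin hle ht₀μ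
  have hdelay : ∀ᵐ u, u ∈ Icc (a - θ) a →
      |p u * x (u - τ u)| ≤ ρ * r (u - (a - θ) - Δ) + μ := by
    refine hpτ.ae_abs_mul_le fun u hu v hv => (hwin v ⟨by linarith [hu.1, hv.1],
      hv.2.trans hu.2⟩).trans (add_le_add_left (mul_le_mul_of_nonneg_left ?_ hρ) μ)
    exact hr.antitoneOn hΔ hθ (mem_Iic.2 (by linarith [hu.2])) (mem_Iic.2 (by
      linarith [hv.2, hu.2])) (by linarith [hv.1])
  have hxc := hx.continuous
  have hrc := hr.continuous
  have h8 := eight_le_sq_of_isMaxOn (h := fun t => x t - ρ * r (t - (a - θ)))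
    (h' := fun t => deriv x t - ρ * deriv r (t - (a - θ))) (by fun_prop)
    (fun t _ => (hx.hasDerivAt t).sub
      (((hr.hasDerivAt _).comp_sub_const t (a - θ)).const_mul ρ))
    (monotoneOn_deriv_sub_delayCosine hr hpτ hx hdelay) ht₀
    (isMaxOn_iff.2 fun t ht => ht₀μ ▸ hle t ht) hμ ht₀μ
    (by simpa only [sub_self, hr.1 0 le_rfl, mul_one, sub_nonpos] using hxθ)
    (by simp only [hxa, sub_sub_cancel, hθ.2.1, mul_zero, sub_zero, le_refl])
  rwa [sub_sub_cancel] at h8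

theorem eight_le_sq_of_abs_sub_delayCosine_le (hΔ : 0 ≤ Δ) (hr : IsDelayCosine Δ r)
    (hθ : IsFirstZero r θ) (hpτ : AdmissibleDelay p τ Δ) (hx : SolvesDDE p τ x univ)
    {a ρ μ t₀ : ℝ} (hρ : 0 ≤ ρ) (hμ : 0 < μ)
    (hwin : ∀ v ∈ Icc (a - θ - Δ) a, |x v| ≤ ρ * r (θ - (a - v)) + μ)
    (hle : ∀ t ∈ Icc (a - θ) a, |x t| - ρ * r (θ - (a - t)) ≤ μ) (ht₀ : t₀ ∈ Ioo (a - θ) a)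
    (ht₀μ : |x t₀| - ρ * r (θ - (a - t₀)) = μ) (hxθ : |x (a - θ)| ≤ ρ) (hxa : x a = 0) :
    8 ≤ θ ^ 2 := by
  have hxt₀ : x t₀ ≠ 0 := fun h0 => by
    have := hr.nonneg hθ (show θ - (a - t₀) ≤ θ by linarith [ht₀.2])
    rw [h0, abs_zero] at ht₀μ
    nlinarith
  obtain ⟨y, hy, hyx, hypos⟩ := hx.exists_pos_abs_eq hxt₀
  simp only [← hyx] at hwin hle ht₀μ hxθ
  rw [abs_of_pos hypos] at ht₀μ
  exact eight_le_sq_of_sub_delayCosine_le hΔ hr hθ hpτ hy hρ hμ hwin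
    (fun t ht => (sub_le_sub_right (le_abs_self _) _).trans (hle t ht)) ht₀ ht₀μ
    ((le_abs_self _).trans hxθ) (abs_eq_zero.1 ((hyx a).trans (by rw [hxa, abs_zero])))

theorem abs_le_delayCosine (hΔ : 0 ≤ Δ) (hr : IsDelayCosine Δ r) (hθ : IsFirstZero r θ)
    (hpτ : AdmissibleDelay p τ Δ) (hx : SolvesDDE p τ x univ) {a ρ : ℝ} (hxa : x a = 0)
    (hbound : ∀ t ∈ Icc (a - Δ - θ) a, |x t| ≤ ρ) :
    ∀ s ∈ Icc 0 (θ + Δ), |x (a - s)| ≤ ρ * r (θ - s) := by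
  have hρ : 0 ≤ ρ := (abs_nonneg _).trans (hbound a ⟨by linarith [hθ.1], le_rfl⟩)
  have hfar : ∀ s ∈ Icc 0 (θ + Δ), θ < s → |x (a - s)| ≤ ρ * r (θ - s) := fun s hs hθs => by
    rw [hr.1 _ (by linarith), mul_one]
    exact hbound _ ⟨by linarith [hs.2], by linarith [hs.1]⟩
  by_contra! hcon
  obtain ⟨s₀, hs₀, hxs₀⟩ := hcon
  have hs₀θ : s₀ ≤ θ := not_lt.1 fun h => (hfar s₀ hs₀ h).not_gt hxs₀
  have hxc := hx.continuous
  have hrc := hr.continuous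
  obtain ⟨sm, hsm, hmax⟩ := isCompact_Icc.exists_isMaxOn (nonempty_Icc.2 hθ.1.le)
    (by fun_prop : ContinuousOn (fun s => |x (a - s)| - ρ * r (θ - s)) (Icc 0 θ))
  set μ := |x (a - sm)| - ρ * r (θ - sm)
  have hle : ∀ t ∈ Icc (a - θ) a, |x t| - ρ * r (θ - (a - t)) ≤ μ := fun t ht => by
    simpa only [sub_sub_cancel] using isMaxOn_iff.1 hmax (a - t) ⟨by linarith [ht.2],
      by linarith [ht.1]⟩
  have hμ : 0 < μ := (sub_pos.2 hxs₀).trans_le (by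
    simpa only [sub_sub_cancel] using hle (a - s₀) ⟨by linarith, by linarith [hs₀.1]⟩)
  have hxθ := hbound (a - θ) ⟨by linarith, by linarith [hθ.1]⟩
  have hsm0 : sm ≠ 0 := fun h0 => by simp [μ, h0, hxa, hθ.2.1] at hμ
  have hsmθ : sm ≠ θ := fun h => by
    simp only [μ, h, sub_self, hr.1 0 le_rfl, mul_one] at hμ
    linarith
  have hwin : ∀ v ∈ Icc (a - θ - Δ) a, |x v| ≤ ρ * r (θ - (a - v)) + μ := fun v hv => by
    rcases le_or_gt (a - v) θ with h | h
    · linarith [hle v ⟨by linarith, hv.2⟩]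
    · simpa only [sub_sub_cancel] using (hfar (a - v) ⟨by linarith [hv.2], by linarith [hv.1]⟩
        h).trans (le_add_of_nonneg_right hμ.le)
  have h8 := eight_le_sq_of_abs_sub_delayCosine_le hΔ hr hθ hpτ hx hρ hμ hwin hle
    (t₀ := a - sm) ⟨by linarith [hsm.2.lt_of_ne hsmθ], by linarith [hsm.1.lt_of_ne' hsm0]⟩
    (by rw [sub_sub_cancel]) hxθ hxa
  nlinarith [hr.firstZero_lt_two hΔ hθ, hθ.1]

end SolvesDDE

/-- The inner integral of the recursion; it is `-f'` for the next term `f'`. -/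
noncomputable def innerInt (g f : ℝ → ℝ) (c s : ℝ) : ℝ :=
  ∫ w in (-c)..s, max (f w) (g w)

/-- `IsBetaSeq g β ϖ` is `β 0 = 1` on `(-∞, 0]` together with
`IsBetaStep g (β n) (ϖ n) (β (n + 1))` for every `n`. -/
def IsBetaStep (g f : ℝ → ℝ) (c : ℝ) (f' : ℝ → ℝ) : Prop :=
  (0 < c ∧ doubleInt g f c = 1) ∧ (∀ t, t ≤ -c → f' t = 1) ∧
    ∀ t, -c ≤ t → t ≤ 0 → f' t = 1 - ∫ s in (-c)..t, innerInt g f c s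

structure IsDecayProfile (f : ℝ → ℝ) : Prop where
  antitoneOn : AntitoneOn f (Iic 0)
  pos : ∀ t < 0, 0 < f t

section BetaStep

variable {g f f' : ℝ → ℝ} {c : ℝ}

theorem IsDecayProfile.intervalIntegrable_max (hf : IsDecayProfile f)
    (hg : ∀ α γ, IntervalIntegrable g volume α γ) {α γ : ℝ} (hα : α ≤ 0) (hγ : γ ≤ 0) :
    IntervalIntegrable (fun w => max (f w) (g w)) volume α γ := by
  have hsub : uIcc α γ ⊆ Iic 0 := fun u hu => hu.2.trans (max_le hα hγ)
  have hfi : IntegrableOn f (uIcc α γ) :=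
    (hf.antitoneOn.mono hsub).integrableOn_isCompact isCompact_uIcc
  rw [intervalIntegrable_iff]
  exact (hfi.mono_set uIoc_subset_uIcc).sup (intervalIntegrable_iff.1 (hg α γ))

theorem innerInt_pos (hf : IsDecayProfile f) (hg : ∀ α γ, IntervalIntegrable g volume α γ)
    {s : ℝ} (h₁ : -c < s) (h₂ : s ≤ 0) : 0 < innerInt g f c s :=
  intervalIntegral_pos_of_pos_on (hf.intervalIntegrable_max hg (by linarith) h₂)
    (fun u hu => (hf.pos u (hu.2.trans_le h₂)).trans_le (le_max_left _ _)) h₁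

theorem innerInt_nonneg (hf : IsDecayProfile f) (hg : ∀ α γ, IntervalIntegrable g volume α γ)
    {s : ℝ} (h₁ : -c ≤ s) (h₂ : s ≤ 0) : 0 ≤ innerInt g f c s := by
  rcases h₁.lt_or_eq with h | rfl
  · exact (innerInt_pos hf hg h h₂).le
  · rw [innerInt, integral_same]

theorem continuousOn_innerInt (hf : IsDecayProfile f)
    (hg : ∀ α γ, IntervalIntegrable g volume α γ) (hc : 0 ≤ c) :
    ContinuousOn (innerInt g f c) (Icc (-c) 0) := by
  have h := continuousOn_primitive_interval'
    (hf.intervalIntegrable_max hg (neg_nonpos.2 hc) le_rfl) left_mem_uIcc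
  rwa [uIcc_of_le (neg_nonpos.2 hc)] at h

theorem innerInt_sub_innerInt (hf : IsDecayProfile f)
    (hg : ∀ α γ, IntervalIntegrable g volume α γ) (hc : 0 ≤ c) {s₁ s₂ : ℝ}
    (h₁ : s₁ ≤ 0) (h₂ : s₂ ≤ 0) :
    innerInt g f c s₂ - innerInt g f c s₁ = ∫ w in s₁..s₂, max (f w) (g w) :=
  integral_interval_sub_left (hf.intervalIntegrable_max hg (by linarith) h₂)
    (hf.intervalIntegrable_max hg (by linarith) h₁)

namespace IsBetaStep

variable (hstep : IsBetaStep g f c f') (hf : IsDecayProfile f)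
  (hg : ∀ α γ, IntervalIntegrable g volume α γ)
include hstep hf hg

theorem intervalIntegrable_innerInt {s₁ s₂ : ℝ} (h₁ : s₁ ∈ Icc (-c) 0) (h₂ : s₂ ∈ Icc (-c) 0) :
    IntervalIntegrable (innerInt g f c) volume s₁ s₂ :=
  ((continuousOn_innerInt hf hg hstep.1.1.le).mono (uIcc_subset_Icc h₁ h₂)).intervalIntegrable

theorem sub_eq_integral {s t : ℝ} (hs : s ∈ Icc (-c) 0) (ht : t ∈ Icc (-c) 0) :
    f' s - f' t = ∫ u in s..t, innerInt g f c u := by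
  have hc : -c ∈ Icc (-c) 0 := left_mem_Icc.2 (neg_nonpos.2 hstep.1.1.le)
  rw [hstep.2.2 s hs.1 hs.2, hstep.2.2 t ht.1 ht.2, ← integral_interval_sub_left
    (hstep.intervalIntegrable_innerInt hf hg hc ht) (hstep.intervalIntegrable_innerInt hf hg hc hs)]
  ring

theorem eq_integral {t : ℝ} (ht : t ∈ Icc (-c) 0) : f' t = ∫ u in t..0, innerInt g f c u := by
  have h0 : (0:ℝ) ∈ Icc (-c) 0 := right_mem_Icc.2 (neg_nonpos.2 hstep.1.1.le)
  have hf'0 : f' 0 = 1 - doubleInt g f c := hstep.2.2 0 h0.1 le_rfl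
  rw [hstep.1.2, sub_self] at hf'0
  rw [← hstep.sub_eq_integral hf hg ht h0, hf'0, sub_zero]

theorem lt_one {t : ℝ} (h₁ : -c < t) (h₂ : t ≤ 0) : f' t < 1 := by
  have hc : -c ∈ Icc (-c) 0 := left_mem_Icc.2 (neg_nonpos.2 hstep.1.1.le)
  have hpos : 0 < ∫ u in (-c)..t, innerInt g f c u :=
    intervalIntegral_pos_of_pos_on (hstep.intervalIntegrable_innerInt hf hg hc ⟨h₁.le, h₂⟩)
      (fun u hu => innerInt_pos hf hg hu.1 (hu.2.le.trans h₂)) h₁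
  rw [hstep.2.2 t h₁.le h₂]
  linarith

theorem isDecayProfile : IsDecayProfile f' := by
  have hc : -c ≤ 0 := neg_nonpos.2 hstep.1.1.le
  have hanti : AntitoneOn f' (Icc (-c) 0) := fun s hs t ht hst => by
    rw [← sub_nonneg, hstep.sub_eq_integral hf hg hs ht]
    exact integral_nonneg hst fun u hu =>
      innerInt_nonneg hf hg (hs.1.trans hu.1) (hu.2.trans ht.2)
  refine ⟨?_, fun t ht => ?_⟩
  · rw [← Iic_union_Icc_eq_Iic hc]
    refine AntitoneOn.union_right (fun s hs t ht _ => ?_) hanti isGreatest_Iic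
      (isLeast_Icc hc)
    rw [hstep.2.1 s hs, hstep.2.1 t ht]
  · rcases le_or_gt t (-c) with h | h
    · rw [hstep.2.1 t h]
      exact one_pos
    · rw [hstep.eq_integral hf hg ⟨h.le, ht.le⟩]
      exact intervalIntegral_pos_of_pos_on
        (hstep.intervalIntegrable_innerInt hf hg ⟨h.le, ht.le⟩ (right_mem_Icc.2 hc))
        (fun u hu => innerInt_pos hf hg (h.trans hu.1) hu.2.le) ht

theorem continuousOn : ContinuousOn f' (Icc (-c) 0) := by
  have hc : -c ≤ 0 := neg_nonpos.2 hstep.1.1.le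
  have h := continuousOn_primitive_interval' (hstep.intervalIntegrable_innerInt hf hg
    (left_mem_Icc.2 hc) (right_mem_Icc.2 hc)) left_mem_uIcc
  rw [uIcc_of_le hc] at h
  exact (continuousOn_const.sub h).congr fun t ht => hstep.2.2 t ht.1 ht.2

theorem hasDerivAt {t : ℝ} (ht : t ∈ Ioo (-c) 0) : HasDerivAt f' (-innerInt g f c t) t := by
  have hcont := continuousOn_innerInt hf hg hstep.1.1.le
  have hderiv := (integral_hasDerivAt_right (hstep.intervalIntegrable_innerInt hf hg
    (left_mem_Icc.2 (by linarith [ht.1, ht.2])) (Ioo_subset_Icc_self ht))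
    ((hcont.mono Ioo_subset_Icc_self).stronglyMeasurableAtFilter isOpen_Ioo t ht)
    (hcont.continuousAt (Icc_mem_nhds ht.1 ht.2))).const_sub 1
  exact hderiv.congr_of_eventuallyEq (eventually_of_mem (Icc_mem_nhds ht.1 ht.2)
    fun s hs => hstep.2.2 s hs.1 hs.2)

end IsBetaStep

end BetaStep

theorem intervalIntegrable_gAux {Δ : ℝ} {r : ℝ → ℝ} (hr : IsDelayCosine Δ r) (ρ θ α γ : ℝ) :
    IntervalIntegrable (gAux ρ Δ θ r) volume α γ := by
  have hc : Continuous fun w => ρ * r (θ - w - Δ) := by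
    have := hr.continuous; fun_prop
  exact ((integrable_indicator_iff measurableSet_Icc).2 hc.integrableOn_Icc).intervalIntegrable

theorem abs_le_mul_max_gAux {Δ θ : ℝ} {r : ℝ → ℝ} (hΔ : 0 ≤ Δ) (hr : IsDelayCosine Δ r)
    (hθ : IsFirstZero r θ) {x f : ℝ → ℝ} {a w ρ M : ℝ} (hρ : 0 ≤ ρ) (hM : 0 < M)
    (hf : IsDecayProfile f) (hx0 : ∀ t ∈ Icc a w, 0 ≤ x t)
    (hxf : ∀ t ∈ Icc a w, x t ≤ M * f (a - t))
    (hleft : ∀ s ∈ Icc 0 Δ, |x (a - s)| ≤ ρ * r (θ - s)) :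
    ∀ u ∈ Icc a w, ∀ v ∈ Icc (u - Δ) u,
      |x v| ≤ M * max (f (a - u)) (gAux (ρ / M) Δ θ r (a - u)) := by
  intro u hu v hv
  rcases le_or_gt a v with hav | hva
  · have hvw : v ∈ Icc a w := ⟨hav, hv.2.trans hu.2⟩
    rw [abs_of_nonneg (hx0 v hvw)]
    calc x v ≤ M * f (a - v) := hxf v hvw
      _ ≤ M * f (a - u) := mul_le_mul_of_nonneg_left (hf.antitoneOn
          (mem_Iic.2 (by linarith [hu.1])) (mem_Iic.2 (by linarith)) (by linarith [hv.2])) hM.le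
      _ ≤ _ := mul_le_mul_of_nonneg_left (le_max_left _ _) hM.le
  · have hmem : a - u ∈ Icc (-Δ) 0 := ⟨by linarith [hv.1], by linarith [hu.1]⟩
    have hg : M * gAux (ρ / M) Δ θ r (a - u) = ρ * r (θ - (a - u) - Δ) := by
      rw [gAux, indicator_of_mem hmem]
      field_simp
    have hxv := hleft (a - v) ⟨by linarith, by linarith [hv.1, hu.1]⟩
    rw [sub_sub_cancel] at hxv
    calc |x v| ≤ ρ * r (θ - (a - v)) := hxv
      _ ≤ ρ * r (θ - (a - u) - Δ) := mul_le_mul_of_nonneg_left (hr.antitoneOn hΔ hθ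
          (mem_Iic.2 (by linarith [hv.1])) (mem_Iic.2 (by linarith)) (by linarith [hv.1])) hρ
      _ = M * gAux (ρ / M) Δ θ r (a - u) := hg.symm
      _ ≤ _ := mul_le_mul_of_nonneg_left (le_max_right _ _) hM.le

namespace SolvesDDE

variable {p τ x g f f' : ℝ → ℝ} {Δ θ c a w M : ℝ} {r : ℝ → ℝ}

/-- `x - M f'(a - ·)` is convex on `[a, e]`: its second derivative is `M max(f, g)(a - ·)`
minus the delayed term. -/
theorem tangent_le_of_isBetaStep (hx : SolvesDDE p τ x univ) (hpτ : AdmissibleDelay p τ Δ)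
    (hstep : IsBetaStep g f c f') (hf : IsDecayProfile f)
    (hg : ∀ α γ, IntervalIntegrable g volume α γ) {e : ℝ} (hae : a ≤ e) (he : e ≤ a + c)
    (hbound : ∀ᵐ u, u ∈ Icc a e → |p u * x (u - τ u)| ≤ M * max (f (a - u)) (g (a - u)))
    {t₀ t : ℝ} (ht₀ : t₀ ∈ Icc a e) (ht : t ∈ Icc a e) :
    x t₀ - M * f' (a - t₀) + (deriv x t₀ - M * innerInt g f c (a - t₀)) * (t - t₀) ≤
      x t - M * f' (a - t) := by
  have hc : 0 ≤ c := hstep.1.1.le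
  have hmem : ∀ s ∈ Icc a e, a - s ∈ Icc (-c) 0 := fun s hs =>
    ⟨by linarith [hs.2], by linarith [hs.1]⟩
  have hK : IntervalIntegrable (fun u => M * max (f (a - u)) (g (a - u))) volume a e := by
    have := (hf.intervalIntegrable_max hg (sub_self a).le (sub_nonpos.2 hae)).comp_sub_left a
    simpa only [sub_sub_cancel, sub_self, sub_zero] using this.const_mul M
  have hz : ∀ t₁ ∈ Icc a e, ∀ t₂ ∈ Icc a e,
      M * innerInt g f c (a - t₂) - M * innerInt g f c (a - t₁) =
        -∫ u in t₁..t₂, M * max (f (a - u)) (g (a - u)) := fun t₁ ht₁ t₂ ht₂ => by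
    rw [← mul_sub, innerInt_sub_innerInt hf hg hc (hmem t₁ ht₁).2 (hmem t₂ ht₂).2,
      intervalIntegral.integral_const_mul,
      integral_comp_sub_left (fun w => max (f w) (g w)) a, integral_symm]
    ring
  have hmono := monotoneOn_sub_add_of_integral_le (μ := 0)
    (fun t₁ _ t₂ _ => hx.deriv_sub_deriv t₁ t₂) hz (hpτ.intervalIntegrable hx.continuous a e) hK
    (hbound.mono fun u hu hu' => by linarith [le_abs_self (p u * x (u - τ u)), hu hu'])
  have h := tangent_sub_sq_le (h := fun t => x t - M * f' (a - t))
    (h' := fun t => deriv x t - M * innerInt g f c (a - t)) (μ := 0)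
    ((hx.continuous.continuousOn).sub (continuousOn_const.mul
      ((hstep.continuousOn hf hg).comp (continuous_sub_left a).continuousOn hmem)))
    (fun s hs => ((hx.hasDerivAt s).sub (((hstep.hasDerivAt hf hg
      ⟨by linarith [hs.2], by linarith [hs.1]⟩).comp_const_sub a s).const_mul M)).congr_deriv
      (by ring))
    hmono ht₀ ht
  simpa only [zero_div, zero_mul, sub_zero] using h

theorem le_sub_of_isBetaStep (hx : SolvesDDE p τ x univ) (hpτ : AdmissibleDelay p τ Δ)
    (hstep : IsBetaStep g f c f') (hf : IsDecayProfile f)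
    (hg : ∀ α γ, IntervalIntegrable g volume α γ) (hM : 0 < M) (haw : a < w)
    (hbound : ∀ᵐ u, u ∈ Icc a w → |p u * x (u - τ u)| ≤ M * max (f (a - u)) (g (a - u)))
    (hxa : x a = 0) (hxw : x w = M) (hx'w : deriv x w = 0) : c ≤ w - a := by
  by_contra! hlt
  have h := hx.tangent_le_of_isBetaStep hpτ hstep hf hg haw.le (by linarith) hbound
    (right_mem_Icc.2 haw.le) (left_mem_Icc.2 haw.le)
  have hf'a : f' (a - a) = 0 := by
    rw [hstep.eq_integral hf hg ⟨by linarith, by linarith⟩, sub_self, integral_same]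
  have hlt1 := hstep.lt_one hf hg (show -c < a - w by linarith) (by linarith)
  have hpos := innerInt_pos hf hg (show -c < a - w by linarith) (by linarith)
  rw [hxa, hxw, hx'w, hf'a] at h
  -- the tangent at `w` has value `M (1 - f' (a - w)) > 0` and negative slope, yet is `≤ 0` at `a`
  nlinarith [mul_pos (mul_pos hM hpos) (sub_pos.2 haw)]

theorem le_mul_of_isBetaStep (hx : SolvesDDE p τ x univ) (hpτ : AdmissibleDelay p τ Δ)
    (hstep : IsBetaStep g f c f') (hf : IsDecayProfile f)
    (hg : ∀ α γ, IntervalIntegrable g volume α γ) (hcw : c ≤ w - a)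
    (hbound : ∀ᵐ u, u ∈ Icc a w → |p u * x (u - τ u)| ≤ M * max (f (a - u)) (g (a - u)))
    (hxa : x a = 0) (hxM : ∀ t ∈ Icc a w, x t ≤ M) :
    ∀ t ∈ Icc a w, x t ≤ M * f' (a - t) := by
  intro t ht
  have hc : 0 < c := hstep.1.1
  rcases le_or_gt (a + c) t with hct | hct
  · rw [hstep.2.1 _ (by linarith), mul_one]
    exact hxM t ht
  have hbound' := hbound.mono fun u hu (hu' : u ∈ Icc a (a + c)) =>
    hu ⟨hu'.1, hu'.2.trans (by linarith)⟩
  have hmem : t ∈ Icc a (a + c) := ⟨ht.1, hct.le⟩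
  have hleft := hx.tangent_le_of_isBetaStep hpτ hstep hf hg (by linarith) le_rfl hbound' hmem
    (left_mem_Icc.2 (by linarith))
  have hright := hx.tangent_le_of_isBetaStep hpτ hstep hf hg (by linarith) le_rfl hbound' hmem
    (right_mem_Icc.2 (by linarith))
  have hf'a : f' (a - a) = 0 := by
    rw [hstep.eq_integral hf hg ⟨by linarith, by linarith⟩, sub_self, integral_same]
  rw [hxa, hf'a, mul_zero, sub_zero] at hleft
  rw [show a - (a + c) = -c by ring, hstep.2.1 _ le_rfl] at hright
  have := hxM (a + c) ⟨by linarith, by linarith⟩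
  -- convexity: below the chord from `(a, 0)` to `(a + c, x (a + c) - M)`
  nlinarith [ht.1]

theorem le_sub_of_isBetaSeq (hΔ : 0 ≤ Δ) (hr : IsDelayCosine Δ r) (hθ : IsFirstZero r θ)
    (hpτ : AdmissibleDelay p τ Δ) (hx : SolvesDDE p τ x univ) {a w ρ M : ℝ} (hρ : 0 ≤ ρ)
    (hM : 0 < M) (haw : a < w) (hxa : x a = 0) (hx0 : ∀ t ∈ Icc a w, 0 ≤ x t)
    (hxM : ∀ t ∈ Icc a w, x t ≤ M) (hxw : x w = M) (hx'w : deriv x w = 0)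
    (hleft : ∀ s ∈ Icc 0 Δ, |x (a - s)| ≤ ρ * r (θ - s)) {β : ℕ → ℝ → ℝ} {ϖ : ℕ → ℝ}
    (hβ : IsBetaSeq (gAux (ρ / M) Δ θ r) β ϖ) (n : ℕ) : ϖ n ≤ w - a := by
  have hg := intervalIntegrable_gAux hr (ρ / M) θ
  have hstep : ∀ n, IsBetaStep (gAux (ρ / M) Δ θ r) (β n) (ϖ n) (β (n + 1)) := hβ.2
  have hbound : ∀ n, IsDecayProfile (β n) → (∀ t ∈ Icc a w, x t ≤ M * β n (a - t)) →
      ∀ᵐ u, u ∈ Icc a w →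
        |p u * x (u - τ u)| ≤ M * max (β n (a - u)) (gAux (ρ / M) Δ θ r (a - u)) :=
    fun n hf hxf => hpτ.ae_abs_mul_le (abs_le_mul_max_gAux hΔ hr hθ hρ hM hf hx0 hxf hleft)
  have hinv : ∀ n, IsDecayProfile (β n) ∧ ∀ t ∈ Icc a w, x t ≤ M * β n (a - t) := by
    intro n
    induction n with
    | zero =>
      refine ⟨⟨fun s hs t ht _ => by rw [hβ.1 s hs, hβ.1 t ht], fun t ht => ?_⟩, fun t ht => ?_⟩
      · rw [hβ.1 t ht.le]
        exact one_pos
      · rw [hβ.1 _ (by linarith [ht.1]), mul_one]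
        exact hxM t ht
    | succ n ih =>
      obtain ⟨hf, hxf⟩ := ih
      exact ⟨(hstep n).isDecayProfile hf hg, hx.le_mul_of_isBetaStep hpτ (hstep n) hf hg
        (hx.le_sub_of_isBetaStep hpτ (hstep n) hf hg hM haw (hbound n hf hxf) hxa hxw hx'w)
        (hbound n hf hxf) hxa hxM⟩
  obtain ⟨hf, hxf⟩ := hinv n
  exact hx.le_sub_of_isBetaStep hpτ (hstep n) hf hg hM haw (hbound n hf hxf) hxa hxw hx'w

end SolvesDDE

theorem semicycle_extremum_bound_general
    (Δ : ℝ) (hΔ : 0 ≤ Δ)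
    (p τ x : ℝ → ℝ)
    (hpm : Measurable p) (hτm : Measurable τ) (hτ0 : ∀ t, 0 ≤ τ t)
    (hτb : ∃ M, ∀ᵐ t ∂(volume : Measure ℝ), |τ t| ≤ M)
    (hp1 : ∀ᵐ t ∂(volume : Measure ℝ), |p t| ≤ 1)
    (hτΔ : essSup τ volume ≤ Δ)
    (r : ℝ → ℝ) (θ : ℝ) (hr : IsDelayCosine Δ r) (hθ : IsFirstZero r θ)
    (hx : SolvesDDE p τ x Set.univ)
    (a b : ℝ) (hxa : x a = 0)
    (hsc : ∀ t ∈ Set.Ioo a b, x t ≠ 0)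
    (ρ : ℝ) (hρ : 0 < ρ)
    (hρge : sSup ((fun t => |x t|) '' Set.Icc (a - Δ - θ) a) ≤ ρ)
    (M : ℝ) (hM : M = sSup ((fun t => |x t|) '' Set.Icc a b))
    (β : ℕ → ℝ → ℝ) (ϖ : ℕ → ℝ) (hβ : IsBetaSeq (gAux (ρ / M) Δ θ r) β ϖ)
    (Ψ : ℝ) (hΨ : Filter.Tendsto ϖ Filter.atTop (nhds Ψ)) :
    ∀ w ∈ Set.Ioo a b, |x w| = M → Ψ ≤ w - a := by
  intro w hw hxw
  have hpτ : AdmissibleDelay p τ Δ :=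
    ⟨hpm, hτm, hτ0, ae_le_of_essSup_le hτb hτΔ, hp1⟩
  obtain ⟨y, hy, hyx, hyw⟩ := hx.exists_pos_abs_eq (hsc w hw)
  have hya : y a = 0 := by rw [← abs_eq_zero, hyx, hxa, abs_zero]
  have hyM : ∀ t ∈ Icc a b, y t ≤ M := fun t ht =>
    (le_abs_self _).trans (hyx t ▸ hM ▸ abs_le_sSup_image hx.continuous ht)
  have hMw : y w = M := by rw [← hxw, ← hyx, abs_of_pos hyw]
  have hy'w : deriv y w = 0 :=
    ((isMaxOn_iff.2 fun t ht => hMw ▸ hyM t ht).isLocalMax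
      (Icc_mem_nhds hw.1 hw.2)).hasDerivAt_eq_zero (hy.hasDerivAt w)
  have hy0 := nonneg_of_pos_of_ne_zero hy.continuous.continuousOn
    (fun t ht => by rw [← abs_ne_zero, hyx, abs_ne_zero]; exact hsc t ⟨ht.1, ht.2.trans hw.2⟩) hyw
  have hleft := hy.abs_le_delayCosine hΔ hr hθ hpτ hya fun t ht =>
    (hyx t ▸ abs_le_sSup_image hx.continuous ht).trans hρge
  exact le_of_tendsto' hΨ (hy.le_sub_of_isBetaSeq hΔ hr hθ hpτ hρ.le (hMw ▸ hyw) hw.1 hya hy0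
    (fun t ht => hyM t ⟨ht.1, ht.2.trans hw.2.le⟩) hMw hy'w
    (fun s hs => hleft s ⟨hs.1, by linarith [hs.2, hθ.1]⟩) hβ)

/-- in any semicycle `(a,b)`, the extremum is attained no earlier than
`a + Ψ(ρ / max_{[a,b]}|x|, Δ)`. -/
theorem semicycle_extremum_bound
    (Δ : ℝ) (hΔ : 0 ≤ Δ)
    (p τ x : ℝ → ℝ)
    (hpm : Measurable p) (hτm : Measurable τ) (hτ0 : ∀ t, 0 ≤ τ t)
    (hτb : ∃ M, ∀ᵐ t ∂(volume : Measure ℝ), |τ t| ≤ M)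
    (hp1 : ∀ᵐ t ∂(volume : Measure ℝ), |p t| ≤ 1)
    (hτΔ : essSup τ volume ≤ Δ)
    (r : ℝ → ℝ) (θ : ℝ) (hr : IsDelayCosine Δ r) (hθ : IsFirstZero r θ)
    (hx : SolvesDDE p τ x Set.univ)
    (a b : ℝ) (hab : a < b) (hxa : x a = 0) (hxb : x b = 0)
    (hsc : ∀ t ∈ Set.Ioo a b, x t ≠ 0)
    (ρ : ℝ) (hρ : 0 < ρ)
    (hρge : sSup ((fun t => |x t|) '' Set.Icc (a - Δ - θ) a) ≤ ρ)
    (M : ℝ) (hM : M = sSup ((fun t => |x t|) '' Set.Icc a b))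
    (β : ℕ → ℝ → ℝ) (ϖ : ℕ → ℝ) (hβ : IsBetaSeq (gAux (ρ / M) Δ θ r) β ϖ)
    (Ψ : ℝ) (hΨ : Filter.Tendsto ϖ Filter.atTop (nhds Ψ)) :
    ∀ w ∈ Set.Ioo a b, |x w| = M → Ψ ≤ w - a :=
  semicycle_extremum_bound_general Δ hΔ p τ x hpm hτm hτ0 hτb hp1 hτΔ r θ hr hθ hx a b hxa hsc ρ hρ
    hρge M hM β ϖ hβ Ψ hΨ
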